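/- Let n ≥ 1 and let T be a closable linear operator on a Hilbert space. Then Tⁿ is self-adjoint if and only if Tⁿ = (T*)ⁿ and σ(Tⁿ) ≠ ℂ. -/

import Mathlib

open LinearPMap

set_option linter.unusedSectionVars false

noncomputable section

section BanachDefs

variable {H : Type*} [NormedAddCommGroup H] [NormedSpace ℂ H]

/-- Composition `g ∘ f` of unbounded operators, with the natural (maximal) domain
`{x ∈ dom f : f x ∈ dom g}`. -/
def LinearPMap.pComp (g f : H →ₗ.[ℂ] H) : H →ₗ.[ℂ] H where
  domain := (g.domain.comap f.toFun).map f.domain.subtype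
  toFun := g.toFun ∘ₗ (f.toFun.restrict (p := g.domain.comap f.toFun) (q := g.domain)
      (fun _ hx => hx)) ∘ₗ
    ((Submodule.equivMapOfInjective f.domain.subtype (Submodule.injective_subtype _)
      (g.domain.comap f.toFun)).symm).toLinearMap

/-- `n`-th power of an unbounded operator; `T^0` is the identity on all of `H`. -/
def LinearPMap.pPow (T : H →ₗ.[ℂ] H) : ℕ → (H →ₗ.[ℂ] H)
  | 0 => (LinearMap.id : H →ₗ[ℂ] H).toPMap ⊤
  | n + 1 => T.pComp (T.pPow n)

theorem LinearPMap.pPow_domain_succ_le (T : H →ₗ.[ℂ] H) (n : ℕ) :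
    (T.pPow (n + 1)).domain ≤ (T.pPow n).domain := by
  intro x hx
  simp_rw [pPow, pComp] at hx
  obtain ⟨y, -, rfl⟩ := hx
  exact y.2

theorem LinearPMap.pPow_domain_le (T : H →ₗ.[ℂ] H) {i n : ℕ} (h : i ≤ n) :
    (T.pPow n).domain ≤ (T.pPow i).domain := by
  induction n with
  | zero => exact Nat.le_zero.mp h ▸ le_rfl
  | succ n ih =>
    rcases Nat.lt_succ_iff_lt_or_eq.mp (Nat.lt_succ_of_le h) with h' | rfl
    · exact le_trans (T.pPow_domain_succ_le n) (ih (Nat.lt_succ_iff.mp h'))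
    · exact le_rfl

/-- `p(T)` for a complex polynomial `p`, defined on `D(T^n)` where `n = deg p`. -/
def LinearPMap.polyApp (p : Polynomial ℂ) (T : H →ₗ.[ℂ] H) : H →ₗ.[ℂ] H where
  domain := (T.pPow p.natDegree).domain
  toFun := ∑ i ∈ (Finset.range (p.natDegree + 1)).attach,
    p.coeff i.1 • ((T.pPow i.1).toFun ∘ₗ Submodule.inclusion
      (T.pPow_domain_le (Nat.lt_succ_iff.mp (Finset.mem_range.mp i.2))))

/-- `A - μ • I` with domain `dom A`. -/
def LinearPMap.subConst (A : H →ₗ.[ℂ] H) (μ : ℂ) : H →ₗ.[ℂ] H :=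
  ⟨A.domain, A.toFun - μ • A.domain.subtype⟩

/-- An unbounded operator is boundedly invertible if it is bijective from its domain onto `H`
with an everywhere-defined bounded (continuous) inverse. -/
def LinearPMap.IsBddInvertible (A : H →ₗ.[ℂ] H) : Prop :=
  ∃ B : H →L[ℂ] H, (∀ y : H, ∃ hy : B y ∈ A.domain, A ⟨B y, hy⟩ = y) ∧
    ∀ x : A.domain, B (A x) = (x : H)

/-- The spectrum of an unbounded operator: `μ ∉ σ(A)` iff `A - μI` is bijective with a
bounded everywhere-defined inverse. -/
def LinearPMap.pSpectrum (A : H →ₗ.[ℂ] H) : Set ℂ :=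
  {μ | ¬ (A.subConst μ).IsBddInvertible}

/-- The kernel of an unbounded operator, as a subset of `H`. -/
def LinearPMap.pKer (A : H →ₗ.[ℂ] H) : Set H :=
  {x | ∃ hx : x ∈ A.domain, A ⟨x, hx⟩ = 0}

/-- The range of an unbounded operator. -/
def LinearPMap.pRan (A : H →ₗ.[ℂ] H) : Set H :=
  Set.range fun x : A.domain => A x

/-- A bounded everywhere-defined operator seen as an unbounded operator. -/
def ContinuousLinearMap.toPMapTop (B : H →L[ℂ] H) : H →ₗ.[ℂ] H :=
  (B : H →ₗ[ℂ] H).toPMap ⊤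

end BanachDefs

section HilbertDefs

variable {H : Type*} [NormedAddCommGroup H] [InnerProductSpace ℂ H] [CompleteSpace H]

/-- A densely defined closed operator is quasinormal if `T T* T = T* T T`. -/
def LinearPMap.IsQuasinormal (T : H →ₗ.[ℂ] H) : Prop :=
  T.IsClosed ∧ Dense (T.domain : Set H) ∧
    T.pComp (T.adjoint.pComp T) = T.adjoint.pComp (T.pComp T)

/-- A densely defined closed operator is normal if `T* T = T T*` (an equality of unbounded
operators, domains included). -/
def LinearPMap.IsNormal (T : H →ₗ.[ℂ] H) : Prop :=
  T.IsClosed ∧ Dense (T.domain : Set H) ∧ T.adjoint.pComp T = T.pComp T.adjoint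

/-- A symmetric (not necessarily densely defined) operator. -/
def LinearPMap.IsSymm (T : H →ₗ.[ℂ] H) : Prop :=
  ∀ x y : T.domain, inner ℂ (T x) (y : H) = (inner ℂ (x : H) (T y) : ℂ)

/-- A paranormal operator: `‖Tx‖² ≤ ‖T²x‖ ‖x‖` for every `x ∈ D(T²)`. -/
def LinearPMap.IsParanormal (T : H →ₗ.[ℂ] H) : Prop :=
  ∀ (x : H) (hx : x ∈ T.domain) (hTx : T ⟨x, hx⟩ ∈ T.domain),
    ‖T ⟨x, hx⟩‖ ^ 2 ≤ ‖T ⟨T ⟨x, hx⟩, hTx⟩‖ * ‖x‖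

end HilbertDefs

end
/-!
Let `μ ∉ σ(Tⁿ)` with resolvent `B`, and let `dⁿ = μ`. Writing `Xⁿ - μ = (X - d) q`, the operator
`q(T) B` inverts `T - d`; it is bounded by the closed graph theorem, because `T` is closable and
`B` commutes with `T`. Dualizing, every `T* - conj d` is onto, and factoring `Xⁿ - conj μ` into
such linear factors shows that `(T*)ⁿ - conj μ` is onto.

Both directions then follow from `(T*)ⁿ ⊆ (Tⁿ)*` and the observation that if `S ⊆ A`, `S - λ` is
onto and `A - λ` is injective, then `S = A`. If `Tⁿ` is self-adjoint, then `i ∉ σ(Tⁿ)` and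
`Tⁿ + i` is injective, so `(T*)ⁿ = Tⁿ`. If `Tⁿ = (T*)ⁿ` and `μ ∉ σ(Tⁿ)`, then `(Tⁿ)* - conj μ`
is injective because `Tⁿ - μ` is onto, so `Tⁿ = (Tⁿ)*`.
-/

open Polynomial Filter Topology

noncomputable section

namespace LinearPMap

section Algebra

variable {H : Type*} [NormedAddCommGroup H] [NormedSpace ℂ H]

/-- `f x` with the junk value `0` off `f.domain`; it spares the membership proofs that
`f ⟨x, hx⟩` would require along iterated compositions. -/
def app (f : H →ₗ.[ℂ] H) (x : H) : H := by
  classical exact if h : x ∈ f.domain then f ⟨x, h⟩ else 0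

theorem app_of_mem {f : H →ₗ.[ℂ] H} {x : H} (h : x ∈ f.domain) : app f x = f ⟨x, h⟩ :=
  dif_pos h

theorem app_zero (f : H →ₗ.[ℂ] H) : app f 0 = 0 := by
  rw [app_of_mem (zero_mem f.domain)]
  exact f.map_zero

theorem app_add {f : H →ₗ.[ℂ] H} {x y : H} (hx : x ∈ f.domain) (hy : y ∈ f.domain) :
    app f (x + y) = app f x + app f y := by
  rw [app_of_mem hx, app_of_mem hy, app_of_mem (add_mem hx hy)]
  exact f.map_add ⟨x, hx⟩ ⟨y, hy⟩

theorem app_smul {f : H →ₗ.[ℂ] H} {x : H} (c : ℂ) (hx : x ∈ f.domain) :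
    app f (c • x) = c • app f x := by
  rw [app_of_mem hx, app_of_mem (Submodule.smul_mem _ c hx)]
  exact f.map_smul c ⟨x, hx⟩

theorem app_sub {f : H →ₗ.[ℂ] H} {x y : H} (hx : x ∈ f.domain) (hy : y ∈ f.domain) :
    app f (x - y) = app f x - app f y := by
  rw [app_of_mem hx, app_of_mem hy, app_of_mem (sub_mem hx hy)]
  exact f.toFun.map_sub ⟨x, hx⟩ ⟨y, hy⟩

theorem app_sum {f : H →ₗ.[ℂ] H} {ι : Type*} (s : Finset ι) (g : ι → H)
    (hg : ∀ i ∈ s, g i ∈ f.domain) : app f (∑ i ∈ s, g i) = ∑ i ∈ s, app f (g i) := by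
  classical
  induction s using Finset.induction with
  | empty => simpa using app_zero f
  | insert a s ha ih =>
    simp only [Finset.mem_insert, forall_eq_or_imp] at hg
    rw [Finset.sum_insert ha, Finset.sum_insert ha,
      app_add hg.1 (Submodule.sum_mem _ hg.2), ih hg.2]

theorem app_of_le {f g : H →ₗ.[ℂ] H} (h : f ≤ g) {x : H} (hx : x ∈ f.domain) :
    app g x = app f x := by
  rw [app_of_mem hx, app_of_mem (h.1 hx)]
  exact (h.2 rfl).symm

theorem subConst_apply (A : H →ₗ.[ℂ] H) (μ : ℂ) (x : (A.subConst μ).domain) :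
    A.subConst μ x = app A x - μ • (x : H) := by
  rw [app_of_mem (f := A) x.2]
  rfl

theorem surjective_subConst_iff {A : H →ₗ.[ℂ] H} {μ : ℂ} :
    Function.Surjective (A.subConst μ) ↔
      ∀ u, ∃ x, ∃ _ : x ∈ A.domain, app A x - μ • x = u := by
  simp only [Function.Surjective, Subtype.exists, subConst_apply]
  rfl

theorem injective_subConst_iff {A : H →ₗ.[ℂ] H} {μ : ℂ} :
    Function.Injective (A.subConst μ) ↔ ∀ z ∈ A.domain, app A z = μ • z → z = 0 := by
  change Function.Injective (A.subConst μ).toFun ↔ _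
  rw [injective_iff_map_eq_zero]
  refine ⟨fun h z hz hez => ?_, fun h z hz => Subtype.ext (h z z.2 ?_)⟩
  · exact congrArg Subtype.val
      (h ⟨z, hz⟩ ((subConst_apply A μ ⟨z, hz⟩).trans (by rw [hez, sub_self])))
  · rw [← sub_eq_zero, ← subConst_apply]
    exact hz

theorem le_of_forall_mem_app_eq {f g : H →ₗ.[ℂ] H}
    (h : ∀ x ∈ f.domain, x ∈ g.domain ∧ app g x = app f x) : f ≤ g := by
  refine ⟨fun x hx => (h x hx).1, fun x y hxy => ?_⟩
  rw [← app_of_mem x.2, ← app_of_mem y.2, ← hxy, (h x x.2).2]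

theorem eq_of_le_of_injective_subConst {S A : H →ₗ.[ℂ] H} (hle : S ≤ A) {ν : ℂ}
    (hinj : Function.Injective (A.subConst ν)) (hsurj : Function.Surjective (S.subConst ν)) :
    S = A := by
  refine le_antisymm hle (le_of_forall_mem_app_eq fun z hz => ?_)
  obtain ⟨x, hxS, hx⟩ := surjective_subConst_iff.mp hsurj (app A z - ν • z)
  have hxA : x ∈ A.domain := hle.1 hxS
  have hzx : app A (z - x) = ν • (z - x) := by
    rw [app_sub hz hxA, app_of_le hle hxS, smul_sub, sub_eq_sub_iff_sub_eq_sub, ← hx]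
  obtain rfl : z = x := sub_eq_zero.mp (injective_subConst_iff.mp hinj _ (sub_mem hz hxA) hzx)
  exact ⟨hxS, (app_of_le hle hxS).symm⟩

theorem mem_pComp_domain {g f : H →ₗ.[ℂ] H} {x : H} :
    x ∈ (g.pComp f).domain ↔ ∃ hx : x ∈ f.domain, f ⟨x, hx⟩ ∈ g.domain :=
  ⟨fun ⟨⟨_, hy⟩, hmem, hyx⟩ => hyx ▸ ⟨hy, hmem⟩, fun ⟨hx, hfx⟩ => ⟨⟨x, hx⟩, hfx, rfl⟩⟩

theorem pComp_apply {g f : H →ₗ.[ℂ] H} {x : H} (hm : x ∈ (g.pComp f).domain)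
    (hx : x ∈ f.domain) (hfx : f ⟨x, hx⟩ ∈ g.domain) :
    (g.pComp f) ⟨x, hm⟩ = g ⟨f ⟨x, hx⟩, hfx⟩ := by
  have hy : ((Submodule.equivMapOfInjective f.domain.subtype (Submodule.injective_subtype _)
      (g.domain.comap f.toFun)).symm ⟨x, hm⟩ : f.domain) = ⟨x, hx⟩ :=
    Subtype.ext (Submodule.map_equivMapOfInjective_symm_apply f.domain.subtype
      (Submodule.injective_subtype _) (g.domain.comap f.toFun) ⟨x, hm⟩)
  exact congrArg g.toFun (Subtype.ext (congrArg f.toFun hy))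

theorem mem_pPow_zero (T : H →ₗ.[ℂ] H) (x : H) : x ∈ (T.pPow 0).domain :=
  Submodule.mem_top

theorem app_pPow_zero (T : H →ₗ.[ℂ] H) (x : H) : app (T.pPow 0) x = x := by
  rw [app_of_mem (mem_pPow_zero T x)]
  rfl

theorem mem_pPow_succ {T : H →ₗ.[ℂ] H} {n : ℕ} {x : H} :
    x ∈ (T.pPow (n + 1)).domain ↔ x ∈ (T.pPow n).domain ∧ app (T.pPow n) x ∈ T.domain := by
  rw [pPow, mem_pComp_domain]
  exact ⟨fun ⟨hx, hfx⟩ => ⟨hx, app_of_mem hx ▸ hfx⟩,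
    fun ⟨hx, hfx⟩ => ⟨hx, app_of_mem hx ▸ hfx⟩⟩

theorem app_pPow_succ {T : H →ₗ.[ℂ] H} {n : ℕ} {x : H} (h : x ∈ (T.pPow (n + 1)).domain) :
    app (T.pPow (n + 1)) x = app T (app (T.pPow n) x) := by
  obtain ⟨hx, hfx⟩ := mem_pPow_succ.mp h
  rw [app_of_mem hx] at hfx ⊢
  rw [app_of_mem h, app_of_mem hfx]
  exact pComp_apply h hx hfx

theorem mem_pPow_one {T : H →ₗ.[ℂ] H} {x : H} : x ∈ (T.pPow 1).domain ↔ x ∈ T.domain := by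
  simp only [mem_pPow_succ, app_pPow_zero, mem_pPow_zero, true_and]

theorem app_pPow_one {T : H →ₗ.[ℂ] H} {x : H} (h : x ∈ T.domain) :
    app (T.pPow 1) x = app T x := by
  rw [app_pPow_succ (mem_pPow_one.mpr h), app_pPow_zero]

theorem mem_pPow_succ'_and_app_pPow_succ' (T : H →ₗ.[ℂ] H) (n : ℕ) (x : H) :
    (x ∈ (T.pPow (n + 1)).domain ↔ x ∈ T.domain ∧ app T x ∈ (T.pPow n).domain) ∧
      (x ∈ (T.pPow (n + 1)).domain →
        app (T.pPow (n + 1)) x = app (T.pPow n) (app T x)) := by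
  induction n generalizing x with
  | zero =>
    refine ⟨?_, fun h => ?_⟩
    · simpa only [mem_pPow_zero, and_true] using mem_pPow_one
    · rw [app_pPow_one (mem_pPow_one.mp h), app_pPow_zero]
  | succ n ih =>
    have hmem : x ∈ (T.pPow (n + 1 + 1)).domain ↔
        x ∈ T.domain ∧ app T x ∈ (T.pPow (n + 1)).domain := by
      rw [mem_pPow_succ, (ih x).1, mem_pPow_succ (x := app T x)]
      constructor
      · rintro ⟨hx, hfx⟩
        exact ⟨hx.1, hx.2, (ih x).2 ((ih x).1.mpr hx) ▸ hfx⟩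
      · rintro ⟨hx, hTx, hfx⟩
        exact ⟨⟨hx, hTx⟩, ((ih x).2 ((ih x).1.mpr ⟨hx, hTx⟩)).symm ▸ hfx⟩
    refine ⟨hmem, fun h => ?_⟩
    have hx : x ∈ (T.pPow (n + 1)).domain := (T.pPow_domain_succ_le _) h
    rw [app_pPow_succ h, (ih x).2 hx, app_pPow_succ (hmem.mp h).2]

theorem mem_pPow_succ' {T : H →ₗ.[ℂ] H} {n : ℕ} {x : H} :
    x ∈ (T.pPow (n + 1)).domain ↔ x ∈ T.domain ∧ app T x ∈ (T.pPow n).domain :=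
  (mem_pPow_succ'_and_app_pPow_succ' T n x).1

theorem app_pPow_succ' {T : H →ₗ.[ℂ] H} {n : ℕ} {x : H} (h : x ∈ (T.pPow (n + 1)).domain) :
    app (T.pPow (n + 1)) x = app (T.pPow n) (app T x) :=
  (mem_pPow_succ'_and_app_pPow_succ' T n x).2 h

theorem app_pPow_mem_domain {T : H →ₗ.[ℂ] H} {x : H} {j m : ℕ}
    (hx : x ∈ (T.pPow m).domain) (hj : j < m) : app (T.pPow j) x ∈ T.domain :=
  (mem_pPow_succ.mp (T.pPow_domain_le hj hx)).2

theorem mem_pPow_and_app_pPow_of_app_eq_smul {T : H →ₗ.[ℂ] H} {d : ℂ} {z : H}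
    (hz : z ∈ T.domain) (hTz : app T z = d • z) (k : ℕ) :
    z ∈ (T.pPow k).domain ∧ app (T.pPow k) z = d ^ k • z := by
  induction k with
  | zero => exact ⟨mem_pPow_zero T z, by rw [app_pPow_zero, pow_zero, one_smul]⟩
  | succ k ih =>
    have hmem : app (T.pPow k) z ∈ T.domain := ih.2 ▸ Submodule.smul_mem _ _ hz
    refine ⟨mem_pPow_succ.mpr ⟨ih.1, hmem⟩, ?_⟩
    rw [app_pPow_succ (mem_pPow_succ.mpr ⟨ih.1, hmem⟩), ih.2, app_smul _ hz, hTz, smul_smul,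
      pow_succ, mul_comm]

/-- `p(T) x`, summed only up to degree `m`: it is `p(T) x` when `p.natDegree ≤ m` and
`x ∈ D(T^m)`. -/
def peval (T : H →ₗ.[ℂ] H) (m : ℕ) (p : ℂ[X]) (x : H) : H :=
  ∑ j ∈ Finset.range (m + 1), p.coeff j • app (T.pPow j) x

theorem peval_mem_domain {T : H →ₗ.[ℂ] H} {m : ℕ} {x : H} (h : x ∈ (T.pPow (m + 1)).domain)
    (p : ℂ[X]) : peval T m p x ∈ T.domain :=
  Submodule.sum_mem _ fun _ hj =>
    Submodule.smul_mem _ _ (app_pPow_mem_domain h (Finset.mem_range.mp hj))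

theorem peval_add {T : H →ₗ.[ℂ] H} {m : ℕ} {x y : H} (hx : x ∈ (T.pPow m).domain)
    (hy : y ∈ (T.pPow m).domain) (p : ℂ[X]) :
    peval T m p (x + y) = peval T m p x + peval T m p y := by
  rw [peval, peval, peval, ← Finset.sum_add_distrib]
  refine Finset.sum_congr rfl fun j hj => ?_
  have hjm : j ≤ m := Nat.lt_succ_iff.mp (Finset.mem_range.mp hj)
  rw [app_add (T.pPow_domain_le hjm hx) (T.pPow_domain_le hjm hy), smul_add]

theorem peval_smul {T : H →ₗ.[ℂ] H} {m : ℕ} {x : H} (hx : x ∈ (T.pPow m).domain)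
    (c : ℂ) (p : ℂ[X]) : peval T m p (c • x) = c • peval T m p x := by
  rw [peval, peval, Finset.smul_sum]
  refine Finset.sum_congr rfl fun j hj => ?_
  rw [app_smul _ (T.pPow_domain_le (Nat.lt_succ_iff.mp (Finset.mem_range.mp hj)) hx),
    smul_comm]

theorem app_peval {T : H →ₗ.[ℂ] H} {m : ℕ} {x : H} (h : x ∈ (T.pPow (m + 1)).domain)
    {p : ℂ[X]} (hp : p.natDegree ≤ m) (a : ℂ) :
    app T (peval T m p x) = peval T (m + 1) ((X - C a) * p) x + a • peval T m p x := by
  have hT : app T (peval T m p x) =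
      ∑ j ∈ Finset.range (m + 1), p.coeff j • app (T.pPow (j + 1)) x := by
    rw [peval, app_sum _ _ fun j hj => Submodule.smul_mem _ _
      (app_pPow_mem_domain h (Finset.mem_range.mp hj))]
    refine Finset.sum_congr rfl fun j hj => ?_
    have hjm : j < m + 1 := Finset.mem_range.mp hj
    rw [app_smul _ (app_pPow_mem_domain h hjm), app_pPow_succ (T.pPow_domain_le hjm h)]
  have hshift : peval T (m + 1) (X * p) x =
      ∑ j ∈ Finset.range (m + 1), p.coeff j • app (T.pPow (j + 1)) x := by
    rw [peval, Finset.sum_range_succ']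
    simp only [coeff_X_mul, coeff_X_mul_zero, zero_smul, add_zero]
  have hlift : peval T (m + 1) p x = peval T m p x := by
    rw [peval, Finset.sum_range_succ, coeff_eq_zero_of_natDegree_lt (Nat.lt_succ_of_le hp),
      zero_smul, add_zero, peval]
  have hsub : peval T (m + 1) ((X - C a) * p) x =
      peval T (m + 1) (X * p) x - a • peval T (m + 1) p x := by
    simp only [peval, sub_mul, coeff_sub, coeff_C_mul, sub_smul, mul_smul,
      Finset.sum_sub_distrib, Finset.smul_sum]
  rw [hsub, hshift, hlift, hT, sub_add_cancel]

theorem mem_pPow_succ_of_peval_mem {T : H →ₗ.[ℂ] H} {m : ℕ} {x : H}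
    (hx : x ∈ (T.pPow m).domain) {p : ℂ[X]} (hp : p.Monic) (hdeg : p.natDegree = m)
    (hpx : peval T m p x ∈ T.domain) : x ∈ (T.pPow (m + 1)).domain := by
  have hlead : p.coeff m = 1 := hdeg ▸ hp.coeff_natDegree
  have hlow : ∑ j ∈ Finset.range m, p.coeff j • app (T.pPow j) x ∈ T.domain :=
    Submodule.sum_mem _ fun j hj =>
      Submodule.smul_mem _ _ (app_pPow_mem_domain hx (Finset.mem_range.mp hj))
  have htop : app (T.pPow m) x = peval T m p x -
      ∑ j ∈ Finset.range m, p.coeff j • app (T.pPow j) x := by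
    rw [peval, Finset.sum_range_succ, hlead, one_smul, add_sub_cancel_left]
  exact mem_pPow_succ.mpr ⟨hx, htop ▸ sub_mem hpx hlow⟩

theorem peval_X_pow_sub_C (T : H →ₗ.[ℂ] H) (x : H) (n : ℕ) (μ : ℂ) :
    peval T n (X ^ n - C μ) x = app (T.pPow n) x - μ • x := by
  simp only [peval, coeff_sub, coeff_X_pow, coeff_C, sub_smul, ite_smul, one_smul, zero_smul,
    Finset.sum_sub_distrib, Finset.sum_ite_eq', Finset.mem_range, Nat.lt_succ_iff,
    le_refl, if_true, zero_le, app_pPow_zero]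

theorem exists_peval_prod_X_sub_C_eq (T : H →ₗ.[ℂ] H) (s : Multiset ℂ)
    (hs : ∀ a ∈ s, Function.Surjective (T.subConst a)) (u : H) :
    ∃ x, ∃ _ : x ∈ (T.pPow (Multiset.card s)).domain,
      peval T (Multiset.card s) (s.map fun a => X - C a).prod x = u := by
  induction s using Multiset.induction_on generalizing u with
  | empty => exact ⟨u, mem_pPow_zero T u, by simp [peval, app_pPow_zero]⟩
  | cons a s ih =>
    simp only [Multiset.mem_cons, forall_eq_or_imp] at hs
    obtain ⟨v, hv, hva⟩ := surjective_subConst_iff.mp hs.1 u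
    obtain ⟨x, hx, hxv⟩ := ih hs.2 v
    have hmonic : (s.map fun a => X - C a).prod.Monic :=
      monic_multiset_prod_of_monic _ _ fun a _ => monic_X_sub_C a
    have hdeg := natDegree_multiset_prod_X_sub_C_eq_card s
    have hx' := mem_pPow_succ_of_peval_mem hx hmonic hdeg (hxv ▸ hv)
    refine ⟨x, by rwa [Multiset.card_cons], ?_⟩
    have hkey := app_peval hx' hdeg.le a
    rw [hxv] at hkey
    rw [Multiset.card_cons, Multiset.map_cons, Multiset.prod_cons, ← hva, hkey,
      add_sub_cancel_right]

/-- `μ ∉ σ(A)`, witnessed by the inverse `B` of `A - μ`. -/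
structure IsResolvent (A : H →ₗ.[ℂ] H) (μ : ℂ) (B : H →L[ℂ] H) : Prop where
  mem_domain : ∀ u, B u ∈ A.domain
  app_sub_smul : ∀ u, app A (B u) - μ • B u = u
  apply_app_sub_smul : ∀ x ∈ A.domain, B (app A x - μ • x) = x

theorem isBddInvertible_subConst_iff {A : H →ₗ.[ℂ] H} {μ : ℂ} :
    (A.subConst μ).IsBddInvertible ↔ ∃ B, IsResolvent A μ B := by
  refine ⟨fun ⟨B, hright, hleft⟩ => ⟨B, ⟨fun u => (hright u).1, fun u => ?_, fun x hx => ?_⟩⟩,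
    fun ⟨B, hB⟩ => ⟨B, fun u => ⟨hB.mem_domain u, ?_⟩, fun x => ?_⟩⟩
  · simpa only [subConst_apply] using (hright u).2
  · simpa only [subConst_apply] using hleft ⟨x, hx⟩
  · rw [subConst_apply]
    exact hB.app_sub_smul u
  · rw [subConst_apply]
    exact hB.apply_app_sub_smul x x.2

namespace IsResolvent

variable {T : H →ₗ.[ℂ] H} {m : ℕ} {μ d : ℂ} {B : H →L[ℂ] H}

theorem surjective {A : H →ₗ.[ℂ] H} (hB : IsResolvent A μ B) :
    Function.Surjective (A.subConst μ) :=
  surjective_subConst_iff.mpr fun u => ⟨B u, hB.mem_domain u, hB.app_sub_smul u⟩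

theorem mem_domain_and_app_comm (hB : IsResolvent (T.pPow (m + 1)) μ B) {y : H}
    (hy : y ∈ T.domain) : B y ∈ T.domain ∧ app T (B y) = B (app T y) := by
  set x := B y
  have hxA : x ∈ (T.pPow (m + 1)).domain := hB.mem_domain y
  have hxT : x ∈ T.domain := (mem_pPow_succ'.mp hxA).1
  have hAx : app (T.pPow (m + 1)) x = y + μ • x := eq_add_of_sub_eq (hB.app_sub_smul y)
  have hx : x ∈ (T.pPow (m + 1 + 1)).domain :=
    mem_pPow_succ.mpr ⟨hxA, hAx ▸ add_mem hy (Submodule.smul_mem _ _ hxT)⟩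
  have hTx : app (T.pPow (m + 1)) (app T x) - μ • app T x = app T y := by
    rw [← app_pPow_succ' hx, app_pPow_succ hx, hAx, app_add hy (Submodule.smul_mem _ _ hxT),
      app_smul _ hxT, add_sub_cancel_right]
  refine ⟨hxT, ?_⟩
  rw [← hTx, hB.apply_app_sub_smul _ (mem_pPow_succ'.mp hx).2]

theorem eq_zero_of_app_eq_smul (hB : IsResolvent (T.pPow (m + 1)) μ B) (hd : d ^ (m + 1) = μ)
    {z : H} (hz : z ∈ T.domain) (hTz : app T z = d • z) : z = 0 := by
  obtain ⟨hzA, hAz⟩ := mem_pPow_and_app_pPow_of_app_eq_smul hz hTz (m + 1)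
  have := hB.apply_app_sub_smul z hzA
  rwa [hAz, hd, sub_self, B.map_zero, eq_comm] at this

/-- `(T - d)⁻¹ = q(T) ∘ B`, where `X^(m+1) - μ = (X - d) q`. -/
def rootResolvent (hB : IsResolvent (T.pPow (m + 1)) μ B) (d : ℂ) : H →ₗ[ℂ] H where
  toFun u := peval T m ((X ^ (m + 1) - C μ) /ₘ (X - C d)) (B u)
  map_add' u v := by
    rw [B.map_add]
    exact peval_add (T.pPow_domain_succ_le m (hB.mem_domain u))
      (T.pPow_domain_succ_le m (hB.mem_domain v)) _
  map_smul' c u := by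
    rw [B.map_smul]
    exact peval_smul (T.pPow_domain_succ_le m (hB.mem_domain u)) c _

theorem rootResolvent_mem_domain (hB : IsResolvent (T.pPow (m + 1)) μ B) (d : ℂ) (u : H) :
    hB.rootResolvent d u ∈ T.domain :=
  peval_mem_domain (hB.mem_domain u) _

theorem app_rootResolvent (hB : IsResolvent (T.pPow (m + 1)) μ B) (hd : d ^ (m + 1) = μ)
    (u : H) : app T (hB.rootResolvent d u) - d • hB.rootResolvent d u = u := by
  have hfactor : (X - C d) * ((X ^ (m + 1) - C μ) /ₘ (X - C d)) = X ^ (m + 1) - C μ :=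
    mul_divByMonic_eq_iff_isRoot.mpr (by simp [hd])
  have hdeg : ((X ^ (m + 1) - C μ) /ₘ (X - C d)).natDegree ≤ m := by
    rw [natDegree_divByMonic _ (monic_X_sub_C d), natDegree_X_pow_sub_C, natDegree_X_sub_C]
    omega
  change app T (peval T m _ (B u)) - d • peval T m _ (B u) = u
  rw [app_peval (hB.mem_domain u) hdeg d, hfactor, peval_X_pow_sub_C, add_sub_cancel_right,
    hB.app_sub_smul]

theorem rootResolvent_app (hB : IsResolvent (T.pPow (m + 1)) μ B) (hd : d ^ (m + 1) = μ)
    {y : H} (hy : y ∈ T.domain) : hB.rootResolvent d (app T y - d • y) = y := by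
  set v := hB.rootResolvent d (app T y - d • y)
  have hv : v ∈ T.domain := hB.rootResolvent_mem_domain d _
  have hvy : app T (v - y) = d • (v - y) := by
    rw [app_sub hv hy, smul_sub, sub_eq_sub_iff_sub_eq_sub, hB.app_rootResolvent hd]
  exact sub_eq_zero.mp (hB.eq_zero_of_app_eq_smul hd (sub_mem hv hy) hvy)

end IsResolvent

end Algebra

section Closable

variable {H : Type*} [NormedAddCommGroup H] [NormedSpace ℂ H]

theorem IsClosed.mem_domain_and_app_eq_of_tendsto {f : H →ₗ.[ℂ] H} (hf : f.IsClosed)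
    {x : ℕ → H} (hx : ∀ k, x k ∈ f.domain) {a b : H} (ha : Tendsto x atTop (𝓝 a))
    (hb : Tendsto (fun k => app f (x k)) atTop (𝓝 b)) : a ∈ f.domain ∧ app f a = b := by
  have hgraph : (a, b) ∈ f.graph := hf.mem_of_tendsto (ha.prodMk_nhds hb)
    (Eventually.of_forall fun k => by
      rw [SetLike.mem_coe, app_of_mem (hx k)]
      exact f.mem_graph ⟨x k, hx k⟩)
  obtain ⟨y, hya, hyb⟩ := f.mem_graph_iff.mp hgraph
  subst hya
  exact ⟨y.2, (app_of_mem y.2).trans hyb⟩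

theorem IsClosable.mem_closure_domain_and_app_eq_of_tendsto {f : H →ₗ.[ℂ] H}
    (hf : f.IsClosable) {x : ℕ → H} (hx : ∀ k, x k ∈ f.domain) {a b : H}
    (ha : Tendsto x atTop (𝓝 a)) (hb : Tendsto (fun k => app f (x k)) atTop (𝓝 b)) :
    a ∈ f.closure.domain ∧ app f.closure a = b :=
  hf.closure_isClosed.mem_domain_and_app_eq_of_tendsto (fun k => f.le_closure.1 (hx k)) ha
    (by simpa only [app_of_le f.le_closure (hx _)] using hb)

theorem IsClosable.exists_tendsto_of_mem_closure_domain {f : H →ₗ.[ℂ] H} (hf : f.IsClosable)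
    {z : H} (hz : z ∈ f.closure.domain) :
    ∃ x : ℕ → H, (∀ k, x k ∈ f.domain) ∧ Tendsto x atTop (𝓝 z) ∧
      Tendsto (fun k => app f (x k)) atTop (𝓝 (app f.closure z)) := by
  have hgraph : (z, app f.closure z) ∈ _root_.closure (f.graph : Set (H × H)) := by
    rw [← Submodule.topologicalClosure_coe, hf.graph_closure_eq_closure_graph,
      app_of_mem hz]
    exact f.closure.mem_graph ⟨z, hz⟩
  obtain ⟨g, hg, hgz⟩ := mem_closure_iff_seq_limit.mp hgraph
  choose y hy₁ hy₂ using fun k => f.mem_graph_iff.mp (hg k)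
  refine ⟨fun k => y k, fun k => (y k).2, ?_, ?_⟩
  · simpa only [hy₁] using hgz.fst_nhds
  · simpa only [app_of_mem (y _).2, hy₂] using hgz.snd_nhds

namespace IsResolvent

variable {T : H →ₗ.[ℂ] H} {m : ℕ} {μ d : ℂ} {B : H →L[ℂ] H}

/-- `B` commutes with `T.closure`, so `B z ∈ D(T)` is an eigenvector of `T`, hence `0`. -/
theorem eq_zero_of_closure_app_eq_smul (hB : IsResolvent (T.pPow (m + 1)) μ B)
    (hT : T.IsClosable) (hd : d ^ (m + 1) = μ) {z : H} (hz : z ∈ T.closure.domain)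
    (hTz : app T.closure z = d • z) : z = 0 := by
  obtain ⟨y, hyT, hyz, hTy⟩ := hT.exists_tendsto_of_mem_closure_domain hz
  have hBz : B z ∈ T.domain := (mem_pPow_succ'.mp (hB.mem_domain z)).1
  have hTBy : Tendsto (fun k => app T (B (y k))) atTop (𝓝 (B (d • z))) := by
    simp only [(hB.mem_domain_and_app_comm (hyT _)).2]
    exact (B.continuous.tendsto _).comp (hTz ▸ hTy)
  have hTBz := (hT.mem_closure_domain_and_app_eq_of_tendsto
    (fun k => (hB.mem_domain_and_app_comm (hyT k)).1)
    ((B.continuous.tendsto _).comp hyz) hTBy).2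
  rw [app_of_le T.le_closure hBz, B.map_smul] at hTBz
  have hz0 := hB.app_sub_smul z
  rwa [hB.eq_zero_of_app_eq_smul hd hBz hTBz, app_zero, smul_zero, sub_zero, eq_comm] at hz0

variable [CompleteSpace H]

theorem continuous_rootResolvent (hB : IsResolvent (T.pPow (m + 1)) μ B) (hT : T.IsClosable)
    (hd : d ^ (m + 1) = μ) : Continuous (hB.rootResolvent d) := by
  refine (hB.rootResolvent d).continuous_of_seq_closed_graph fun u a w hu hRu => ?_
  set R := hB.rootResolvent d
  have hTRu : Tendsto (fun k => app T (R (u k))) atTop (𝓝 (a + d • w)) := by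
    have hTR : ∀ k, app T (R (u k)) = u k + d • R (u k) := fun k =>
      eq_add_of_sub_eq (hB.app_rootResolvent hd (u k))
    simp only [hTR]
    exact hu.add (hRu.const_smul d)
  obtain ⟨hw, hTw⟩ := hT.mem_closure_domain_and_app_eq_of_tendsto
    (fun k => hB.rootResolvent_mem_domain d (u k)) hRu hTRu
  have hRa : R a ∈ T.domain := hB.rootResolvent_mem_domain d a
  have hdiff : app T.closure (w - R a) = d • (w - R a) := by
    rw [app_sub hw (T.le_closure.1 hRa), app_of_le T.le_closure hRa, hTw,
      eq_add_of_sub_eq (hB.app_rootResolvent hd a), smul_sub]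
    abel
  exact sub_eq_zero.mp (hB.eq_zero_of_closure_app_eq_smul hT hd
    (sub_mem hw (T.le_closure.1 hRa)) hdiff)

theorem exists_isResolvent_of_pPow (hB : IsResolvent (T.pPow (m + 1)) μ B) (hT : T.IsClosable)
    (hd : d ^ (m + 1) = μ) : ∃ R, IsResolvent T d R :=
  ⟨⟨hB.rootResolvent d, hB.continuous_rootResolvent hT hd⟩,
    ⟨hB.rootResolvent_mem_domain d, hB.app_rootResolvent hd,
      fun _ hy => hB.rootResolvent_app hd hy⟩⟩

end IsResolvent

end Closable

section Hilbert

variable {H : Type*} [NormedAddCommGroup H] [InnerProductSpace ℂ H]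

local notation "⟪" x ", " y "⟫" => @inner ℂ _ _ x y

variable {A : H →ₗ.[ℂ] H} {μ : ℂ}

theorem abs_im_mul_norm_le_norm_subConst (hA : A.IsFormalAdjoint A) (ν : ℂ) (x : A.domain) :
    |ν.im| * ‖(x : H)‖ ≤ ‖A.subConst ν x‖ := by
  have hreal : (⟪(x : H), A x⟫).im = 0 := by
    rw [← Complex.conj_eq_iff_im, inner_conj_symm, hA x x]
  have him : (⟪(x : H), A.subConst ν x⟫).im = -(ν.im * ‖(x : H)‖ ^ 2) := by
    change (⟪(x : H), A x - ν • (x : H)⟫).im = _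
    rw [inner_sub_right, inner_smul_right, Complex.sub_im, hreal, zero_sub,
      inner_self_eq_norm_sq_to_K, ← RCLike.ofReal_pow]
    exact congrArg Neg.neg (Complex.im_mul_ofReal ν _)
  have hsq : |ν.im| * ‖(x : H)‖ ^ 2 ≤ ‖(x : H)‖ * ‖A.subConst ν x‖ :=
    calc |ν.im| * ‖(x : H)‖ ^ 2 = |(⟪(x : H), A.subConst ν x⟫).im| := by
          rw [him, abs_neg, abs_mul, abs_of_nonneg (sq_nonneg ‖(x : H)‖)]
      _ ≤ ‖⟪(x : H), A.subConst ν x⟫‖ := Complex.abs_im_le_norm _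
      _ ≤ ‖(x : H)‖ * ‖A.subConst ν x‖ := norm_inner_le_norm _ _
  rcases (norm_nonneg (x : H)).eq_or_lt with hx | hx
  · rw [← hx, mul_zero]
    exact norm_nonneg _
  · nlinarith

theorem injective_subConst_of_im_ne_zero (hA : A.IsFormalAdjoint A) {ν : ℂ} (hν : ν.im ≠ 0) :
    Function.Injective (A.subConst ν) := by
  change Function.Injective (A.subConst ν).toFun
  refine (injective_iff_map_eq_zero _).mpr fun x hx => ?_
  have hbound := abs_im_mul_norm_le_norm_subConst hA ν x
  rw [show A.subConst ν x = 0 from hx, norm_zero] at hbound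
  have hx0 : ‖(x : H)‖ = 0 :=
    le_antisymm (nonpos_of_mul_nonpos_right hbound (abs_pos.mpr hν)) (norm_nonneg _)
  exact Subtype.ext (norm_eq_zero.mp hx0)

variable [CompleteSpace H]

theorem IsResolvent.surjective_adjoint_subConst {T : H →ₗ.[ℂ] H} {d : ℂ} {R : H →L[ℂ] H}
    (hT : Dense (T.domain : Set H)) (hR : IsResolvent T d R) :
    Function.Surjective (T.adjoint.subConst (starRingEnd ℂ d)) := by
  refine surjective_subConst_iff.mpr fun u => ?_
  set x := R.adjoint u
  have hx : ∀ v : T.domain, ⟪u + starRingEnd ℂ d • x, (v : H)⟫ = ⟪x, T v⟫ := fun v => by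
    have hRT : R (T v) = v + d • R v := by
      have := hR.apply_app_sub_smul v v.2
      rwa [R.map_sub, R.map_smul, app_of_mem v.2, sub_eq_iff_eq_add] at this
    rw [ContinuousLinearMap.adjoint_inner_left, hRT, inner_add_right, inner_smul_right,
      ← ContinuousLinearMap.adjoint_inner_left, inner_add_left, inner_smul_left,
      Complex.conj_conj]
  have hmem : x ∈ T.adjoint.domain := mem_adjoint_domain_of_exists x ⟨_, hx⟩
  refine ⟨x, hmem, ?_⟩
  rw [app_of_mem hmem, adjoint_apply_eq hT ⟨x, hmem⟩ hx, add_sub_cancel_right]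

theorem inner_app_pPow_adjoint {T : H →ₗ.[ℂ] H} (hT : Dense (T.domain : Set H)) (k : ℕ)
    {x y : H} (hx : x ∈ (T.pPow k).domain) (hy : y ∈ (T.adjoint.pPow k).domain) :
    ⟪app (T.pPow k) x, y⟫ = ⟪x, app (T.adjoint.pPow k) y⟫ := by
  induction k generalizing x y with
  | zero => rw [app_pPow_zero, app_pPow_zero]
  | succ k ih =>
    obtain ⟨hx₁, hx₂⟩ := mem_pPow_succ.mp hx
    obtain ⟨hy₁, hy₂⟩ := mem_pPow_succ'.mp hy
    rw [app_pPow_succ hx, app_pPow_succ' hy, ← ih hx₁ hy₂, app_of_mem hx₂, app_of_mem hy₁]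
    exact (adjoint_isFormalAdjoint hT).symm ⟨_, hx₂⟩ ⟨y, hy₁⟩

theorem adjoint_pPow_le_pPow_adjoint {T : H →ₗ.[ℂ] H} (hT : Dense (T.domain : Set H)) (k : ℕ)
    (hTk : Dense ((T.pPow k).domain : Set H)) :
    T.adjoint.pPow k ≤ (T.pPow k).adjoint :=
  IsFormalAdjoint.le_adjoint hTk fun x y => by
    simpa only [app_of_mem x.2, app_of_mem y.2] using inner_app_pPow_adjoint hT k x.2 y.2

theorem injective_adjoint_subConst_of_surjective (hA : Dense (A.domain : Set H))
    (h : Function.Surjective (A.subConst μ)) :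
    Function.Injective (A.adjoint.subConst (starRingEnd ℂ μ)) := by
  refine injective_subConst_iff.mpr fun z hz hAz => (inner_self_eq_zero (𝕜 := ℂ)).mp ?_
  obtain ⟨x, hxA, hx⟩ := surjective_subConst_iff.mp h z
  have hadj := adjoint_isFormalAdjoint hA ⟨z, hz⟩ ⟨x, hxA⟩
  rw [← app_of_mem hz, ← app_of_mem hxA, hAz, inner_smul_left, Complex.conj_conj] at hadj
  nth_rewrite 2 [← hx]
  rw [inner_sub_right, inner_smul_right, ← hadj, sub_self]

theorem mem_adjoint_domain_and_app_of_inner_subConst {z : H} (hA : Dense (A.domain : Set H))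
    (hz : ∀ x : A.domain, ⟪A.subConst μ x, z⟫ = 0) :
    z ∈ A.adjoint.domain ∧ app A.adjoint z = starRingEnd ℂ μ • z := by
  have hx : ∀ x : A.domain, ⟪starRingEnd ℂ μ • z, (x : H)⟫ = ⟪z, A x⟫ := fun x => by
    have hAx : ⟪A x - μ • (x : H), z⟫ = 0 := hz x
    rw [inner_sub_left, sub_eq_zero] at hAx
    rw [inner_smul_left, Complex.conj_conj, ← inner_conj_symm z (A x), hAx, inner_conj_symm,
      inner_smul_right]
  have hmem : z ∈ A.adjoint.domain := mem_adjoint_domain_of_exists z ⟨_, hx⟩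
  exact ⟨hmem, by rw [app_of_mem hmem, adjoint_apply_eq hA ⟨z, hmem⟩ hx]⟩

theorem IsResolvent.surjective_adjoint_pPow_subConst {T : H →ₗ.[ℂ] H} {m : ℕ} {B : H →L[ℂ] H}
    (hB : IsResolvent (T.pPow (m + 1)) μ B) (hT : Dense (T.domain : Set H))
    (hclos : T.IsClosable) :
    Function.Surjective ((T.adjoint.pPow (m + 1)).subConst (starRingEnd ℂ μ)) := by
  set p : ℂ[X] := X ^ (m + 1) - C (starRingEnd ℂ μ)
  have hdeg : p.natDegree = m + 1 := natDegree_X_pow_sub_C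
  have hcard : Multiset.card p.roots = m + 1 := IsAlgClosed.card_roots_eq_natDegree.trans hdeg
  have hprod : (p.roots.map fun a => X - C a).prod = p :=
    prod_multiset_X_sub_C_of_monic_of_roots_card_eq (monic_X_pow_sub_C _ m.succ_ne_zero)
      (hcard.trans hdeg.symm)
  have hfactors : ∀ a ∈ p.roots, Function.Surjective (T.adjoint.subConst a) := fun a ha => by
    have hroot : starRingEnd ℂ a ^ (m + 1) = μ := by
      have := (mem_roots (X_pow_sub_C_ne_zero m.succ_pos _)).mp ha
      rw [IsRoot, eval_sub, eval_pow, eval_X, eval_C, sub_eq_zero] at this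
      rw [← map_pow, this, Complex.conj_conj]
    obtain ⟨R, hR⟩ := hB.exists_isResolvent_of_pPow hclos hroot
    have := hR.surjective_adjoint_subConst hT
    rwa [Complex.conj_conj] at this
  refine surjective_subConst_iff.mpr fun u => ?_
  obtain ⟨x, hx, hxu⟩ := exists_peval_prod_X_sub_C_eq T.adjoint p.roots hfactors u
  rw [hprod, hcard, peval_X_pow_sub_C] at hxu
  exact ⟨x, hcard ▸ hx, hxu⟩

theorem isClosed_range_subConst (hA : A.IsClosed)
    (hbound : ∀ x : A.domain, ‖(x : H)‖ ≤ ‖A.subConst μ x‖) :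
    _root_.IsClosed (Set.range (A.subConst μ)) := by
  refine IsSeqClosed.isClosed fun f u hf hfu => ?_
  choose x hx using hf
  have hcauchy : CauchySeq fun k => (x k : H) := by
    refine Metric.cauchySeq_iff.mpr fun ε hε => ?_
    obtain ⟨N, hN⟩ := Metric.cauchySeq_iff.mp hfu.cauchySeq ε hε
    refine ⟨N, fun p hp q hq => (le_of_eq_of_le (dist_eq_norm _ _) ?_).trans_lt (hN p hp q hq)⟩
    have := hbound (x p - x q)
    rwa [map_sub, hx, hx, ← dist_eq_norm] at this
  obtain ⟨a, ha⟩ := cauchySeq_tendsto_of_complete hcauchy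
  have hAx : Tendsto (fun k => app A (x k)) atTop (𝓝 (u + μ • a)) := by
    have happ : ∀ k, app A (x k) = f k + μ • (x k : H) := fun k => by
      rw [← hx, subConst_apply, sub_add_cancel]
    simp only [happ]
    exact hfu.add (ha.const_smul μ)
  obtain ⟨haA, hAa⟩ := hA.mem_domain_and_app_eq_of_tendsto (fun k => (x k).2) ha hAx
  exact ⟨⟨a, haA⟩, by rw [subConst_apply, hAa, add_sub_cancel_right]⟩

theorem exists_isResolvent_of_isClosed (hA : A.IsClosed)
    (hbound : ∀ x : A.domain, ‖(x : H)‖ ≤ ‖A.subConst μ x‖)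
    (horth : ∀ z, (∀ x : A.domain, ⟪A.subConst μ x, z⟫ = 0) → z = 0) :
    ∃ B, IsResolvent A μ B := by
  set e : A.domain →ₗ[ℂ] H := (A.subConst μ).toFun
  have hinj : Function.Injective e := (injective_iff_map_eq_zero e).mpr fun x hx => by
    have := hbound x
    rw [show A.subConst μ x = 0 from hx, norm_zero] at this
    exact Subtype.ext (norm_le_zero_iff.mp this)
  have hsurj : Function.Surjective e := by
    have hclosed : _root_.IsClosed (LinearMap.range e : Set H) := isClosed_range_subConst hA hbound
    rw [← LinearMap.range_eq_top, ← hclosed.submodule_topologicalClosure_eq,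
      Submodule.topologicalClosure_eq_top_iff, Submodule.eq_bot_iff]
    exact fun z hz => horth z fun x => hz (e x) (LinearMap.mem_range_self e x)
  set E := LinearEquiv.ofBijective e ⟨hinj, hsurj⟩
  have hE : ∀ u, A.subConst μ (E.symm u) = u := E.apply_symm_apply
  refine ⟨(A.domain.subtype ∘ₗ E.symm.toLinearMap).mkContinuous 1 fun u => ?_,
    ⟨fun u => (E.symm u).2, fun u => (subConst_apply A μ (E.symm u)).symm.trans (hE u),
      fun x hx => ?_⟩⟩
  · rw [one_mul, ← congrArg norm (hE u)]
    exact hbound _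
  · change ((E.symm (app A x - μ • x) : A.domain) : H) = x
    rw [← subConst_apply A μ ⟨x, hx⟩]
    exact congrArg Subtype.val (E.symm_apply_apply ⟨x, hx⟩)

theorem exists_isResolvent_I_of_adjoint_eq (hA : Dense (A.domain : Set H)) (hsa : A.adjoint = A) :
    ∃ B, IsResolvent A Complex.I B := by
  have hsym : A.IsFormalAdjoint A := by simpa only [hsa] using adjoint_isFormalAdjoint hA
  refine exists_isResolvent_of_isClosed (hsa ▸ adjoint_isClosed hA)
    (fun x => by simpa using abs_im_mul_norm_le_norm_subConst hsym Complex.I x) fun z hz => ?_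
  obtain ⟨hzA, hAz⟩ := mem_adjoint_domain_and_app_of_inner_subConst hA hz
  rw [hsa, Complex.conj_I] at hAz
  exact injective_subConst_iff.mp (injective_subConst_of_im_ne_zero hsym (ν := -Complex.I)
    (by simp)) z (hsa ▸ hzA) hAz

end Hilbert

end LinearPMap

end

/-- `Tⁿ` is self-adjoint iff `Tⁿ = (T*)ⁿ` and `σ(Tⁿ) ≠ ℂ`. -/
theorem statement_8 {H : Type*} [NormedAddCommGroup H] [InnerProductSpace ℂ H] [CompleteSpace H]
    (n : ℕ) (hn : 1 ≤ n)
    (T : H →ₗ.[ℂ] H) (hdense : Dense (T.domain : Set H)) (hclosable : T.IsClosable)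
    (hTn : Dense ((T.pPow n).domain : Set H)) :
    (T.pPow n).adjoint = T.pPow n ↔
      (T.pPow n = T.adjoint.pPow n ∧ (T.pPow n).pSpectrum ≠ Set.univ) := by
  obtain ⟨m, rfl⟩ : ∃ m, n = m + 1 := ⟨n - 1, by omega⟩
  have hle := adjoint_pPow_le_pPow_adjoint hdense (m + 1) hTn
  constructor
  · intro hsa
    obtain ⟨B, hB⟩ := exists_isResolvent_I_of_adjoint_eq hTn hsa
    have hsym : (T.pPow (m + 1)).IsFormalAdjoint (T.pPow (m + 1)) := by
      simpa only [hsa] using adjoint_isFormalAdjoint hTn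
    have hsurj := hB.surjective_adjoint_pPow_subConst hdense hclosable
    rw [Complex.conj_I] at hsurj
    rw [hsa] at hle
    refine ⟨(eq_of_le_of_injective_subConst hle
      (injective_subConst_of_im_ne_zero hsym (by simp)) hsurj).symm,
      (Set.ne_univ_iff_exists_notMem _).mpr
        ⟨Complex.I, not_not.mpr (isBddInvertible_subConst_iff.mpr ⟨B, hB⟩)⟩⟩
  · rintro ⟨heq, hσ⟩
    obtain ⟨μ, hμ⟩ := (Set.ne_univ_iff_exists_notMem _).mp hσ
    obtain ⟨B, hB⟩ := isBddInvertible_subConst_iff.mp (not_not.mp hμ)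
    have hsurj := hB.surjective_adjoint_pPow_subConst hdense hclosable
    rw [← heq] at hsurj hle
    exact (eq_of_le_of_injective_subConst hle
      (injective_adjoint_subConst_of_surjective hTn hB.surjective) hsurj).symm
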